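/- Special soundness extraction: given two accepting transcripts with the same commitment t and distinct challenges c ≠ c', i.e., A·z_s + z_e + Δ·z_x = t + c·y and A·z'_s + z'_e + Δ·z'_x = t + c'·y (mod q), and assuming c − c' is invertible in Z_q, the extracted witness s̄ = (c−c')⁻¹(z_s − z'_s), ē = (c−c')⁻¹(z_e − z'_e), x̄ = (c−c')⁻¹(z_x − z'_x) satisfies A·s̄ + ē + Δ·x̄ = y (mod q). -/
import Mathlib


/-- Special soundness: from two accepting transcripts with the same commitment
and distinct (invertible difference) challenges, the extracted witness satisfies
the LWE relation. -/
theorem special_soundness_extraction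
    (q d lam : ℕ) (hq : 0 < q) (hd : 0 < d) (hlam : 0 < lam)
    (A : Matrix (Fin d) (Fin lam) (ZMod q)) (Δ : ZMod q)
    (y t : Fin d → ZMod q) (c c' : ZMod q)
    (hcc : IsUnit (c - c'))
    (zs zs' : Fin lam → ZMod q) (ze zx ze' zx' : Fin d → ZMod q)
    (h1 : A.mulVec zs + ze + Δ • zx = t + c • y)
    (h2 : A.mulVec zs' + ze' + Δ • zx' = t + c' • y) :
    A.mulVec (Ring.inverse (c - c') • (zs - zs'))
      + Ring.inverse (c - c') • (ze - ze')
      + Δ • (Ring.inverse (c - c') • (zx - zx')) = y := by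
  have key : A.mulVec (zs - zs') + (ze - ze') + Δ • (zx - zx') = (c - c') • y := by
    rw [Matrix.mulVec_sub, smul_sub, sub_smul]
    have := congrArg₂ (· - ·) h1 h2
    linear_combination (norm := module) this
  have hinv : Ring.inverse (c - c') * (c - c') = 1 := Ring.inverse_mul_cancel _ hcc
  rw [Matrix.mulVec_smul]
  calc Ring.inverse (c - c') • A.mulVec (zs - zs') + Ring.inverse (c - c') • (ze - ze')
        + Δ • Ring.inverse (c - c') • (zx - zx')
      = Ring.inverse (c - c') • (A.mulVec (zs - zs') + (ze - ze') + Δ • (zx - zx')) := by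
        module
    _ = Ring.inverse (c - c') • ((c - c') • y) := by rw [key]
    _ = y := by rw [smul_smul, hinv, one_smul]
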